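/- Let t ∈ (0,1] and consider the brackets μ(e₁,e₂) = −√(t+1/t) e₄, μ(e₁,e₃) = √t e₅, μ(e₂,e₄) = √t e₅, μ(e₁,e₄) = −(1/√t) e₆, μ(e₂,e₃) = (1/√t) e₆ and μ̃(e₁,e₂) = −√(t+1/t) e₄, μ̃(e₁,e₃) = √t e₅, μ̃(e₂,e₄) = √t e₅, μ̃(e₁,e₄) = (1/√t) e₆, μ̃(e₂,e₃) = −(1/√t) e₆ on ℝ⁶. Then there is no block-diagonal matrix G = diag(R(a,b), R(c,d), R(k,h)) with R(a,b) = [[a,−b],[b,a]], a²+b² = c²+d² = k²+h² = 1, such that G·μ = μ̃. -/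
import Mathlib


open Real

/-- The bracket `μ₇ᵗ`: `μ(e₁,e₂)=−√(t+1/t)e₄`, `μ(e₁,e₃)=√t e₅`,
`μ(e₂,e₄)=√t e₅`, `μ(e₁,e₄)=−(1/√t)e₆`, `μ(e₂,e₃)=(1/√t)e₆`. -/
noncomputable def mu7 (t : ℝ) (X Y : Fin 6 → ℝ) : Fin 6 → ℝ :=
  ![0, 0, 0,
    -Real.sqrt (t + 1 / t) * (X 0 * Y 1 - X 1 * Y 0),
    Real.sqrt t * (X 0 * Y 2 - X 2 * Y 0) + Real.sqrt t * (X 1 * Y 3 - X 3 * Y 1),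
    -(1 / Real.sqrt t) * (X 0 * Y 3 - X 3 * Y 0)
      + (1 / Real.sqrt t) * (X 1 * Y 2 - X 2 * Y 1)]

/-- The bracket `μ̃₇ᵗ`: same as `μ₇ᵗ` except `μ̃(e₁,e₄)=(1/√t)e₆`,
`μ̃(e₂,e₃)=−(1/√t)e₆`. -/
noncomputable def mu7t (t : ℝ) (X Y : Fin 6 → ℝ) : Fin 6 → ℝ :=
  ![0, 0, 0,
    -Real.sqrt (t + 1 / t) * (X 0 * Y 1 - X 1 * Y 0),
    Real.sqrt t * (X 0 * Y 2 - X 2 * Y 0) + Real.sqrt t * (X 1 * Y 3 - X 3 * Y 1),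
    (1 / Real.sqrt t) * (X 0 * Y 3 - X 3 * Y 0)
      - (1 / Real.sqrt t) * (X 1 * Y 2 - X 2 * Y 1)]

/-- The block-diagonal matrix `G = diag(R(a,b), R(c,d), R(k,h))` with
`R(a,b) = [[a,−b],[b,a]]`, acting on `ℝ⁶`. -/
def Gblock (a b c d k h : ℝ) (X : Fin 6 → ℝ) : Fin 6 → ℝ :=
  ![a * X 0 - b * X 1, b * X 0 + a * X 1,
    c * X 2 - d * X 3, d * X 2 + c * X 3,
    k * X 4 - h * X 5, h * X 4 + k * X 5]

private lemma vec6_five {α : Type*} (x0 x1 x2 x3 x4 x5 : α) :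
    ![x0,x1,x2,x3,x4,x5] 5 = x5 := rfl

set_option maxHeartbeats 1000000 in
/-- for `t ∈ (0,1]` there is no
`G = diag(R(a,b), R(c,d), R(k,h)) ∈ U(1)×U(1)×U(1)` (unit-norm blocks) with
`G·μ₇ᵗ = μ̃₇ᵗ`, where `(G·μ)(X,Y) = G μ(G⁻¹X, G⁻¹Y)` and
`G⁻¹ = diag(R(a,−b), R(c,−d), R(k,−h))`. -/
theorem stmt15 (t : ℝ) (ht : t ∈ Set.Ioc (0 : ℝ) 1) :
    ¬ ∃ a b c d k h : ℝ,
      a ^ 2 + b ^ 2 = 1 ∧ c ^ 2 + d ^ 2 = 1 ∧ k ^ 2 + h ^ 2 = 1 ∧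
      ∀ X Y : Fin 6 → ℝ,
        Gblock a b c d k h
          (mu7 t (Gblock a (-b) c (-d) k (-h) X) (Gblock a (-b) c (-d) k (-h) Y))
          = mu7t t X Y := by
  rintro ⟨a, b, c, d, k, h, hab, hcd, hkh, heq⟩
  obtain ⟨ht0, ht1⟩ := ht
  have H12_2 := congrFun (heq ![1,0,0,0,0,0] ![0,1,0,0,0,0]) 2
  have H12_3 := congrFun (heq ![1,0,0,0,0,0] ![0,1,0,0,0,0]) 3
  simp only [mu7, mu7t, Gblock, Matrix.cons_val_zero, Matrix.cons_val_one, Matrix.head_cons,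
    Matrix.cons_val_two, Matrix.tail_cons, Matrix.cons_val_three, Matrix.cons_val_four,
    Matrix.cons_val_succ, vec6_five] at H12_2 H12_3
  ring_nf at H12_2 H12_3
  have hw : 0 < Real.sqrt (t + t⁻¹) := Real.sqrt_pos.mpr (by positivity)
  have hd : d = 0 := by
    have hdw : d * Real.sqrt (t + t⁻¹) = 0 := by
      linear_combination H12_2 - d * Real.sqrt (t + t⁻¹) * hab
    exact (mul_eq_zero.mp hdw).resolve_right (ne_of_gt hw)
  have hc : c = 1 := by
    have hcw : (c - 1) * Real.sqrt (t + t⁻¹) = 0 := by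
      linear_combination -H12_3 - c * Real.sqrt (t + t⁻¹) * hab
    have := (mul_eq_zero.mp hcw).resolve_right (ne_of_gt hw)
    linarith
  subst hd hc
  have H13_4 := congrFun (heq ![1,0,0,0,0,0] ![0,0,1,0,0,0]) 4
  have H13_5 := congrFun (heq ![1,0,0,0,0,0] ![0,0,1,0,0,0]) 5
  have H14_4 := congrFun (heq ![1,0,0,0,0,0] ![0,0,0,1,0,0]) 4
  have H14_5 := congrFun (heq ![1,0,0,0,0,0] ![0,0,0,1,0,0]) 5
  simp only [mu7, mu7t, Gblock, Matrix.cons_val_zero, Matrix.cons_val_one, Matrix.head_cons,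
    Matrix.cons_val_two, Matrix.tail_cons, Matrix.cons_val_three, Matrix.cons_val_four,
    Matrix.cons_val_succ, vec6_five] at H13_4 H13_5 H14_4 H14_5
  ring_nf at H13_4 H13_5 H14_4 H14_5
  -- H13_4 : k * √t * a + b * h * (√t)⁻¹ = √t
  -- H13_5 : -(k * b * (√t)⁻¹) + √t * a * h = 0
  -- H14_4 : -(k * √t * b) + a * h * (√t)⁻¹ = 0
  -- H14_5 : -(k * a * (√t)⁻¹) - √t * b * h = (√t)⁻¹
  have hS : 0 < Real.sqrt t := Real.sqrt_pos.mpr ht0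
  have hSu : Real.sqrt t * (Real.sqrt t)⁻¹ = 1 := mul_inv_cancel₀ (ne_of_gt hS)
  have A : h * b * ((Real.sqrt t)⁻¹ * (Real.sqrt t)⁻¹ - Real.sqrt t * Real.sqrt t) = 2 := by
    linear_combination (Real.sqrt t)⁻¹ * H13_4 + Real.sqrt t * H14_5 + 2 * hSu
  have B : h * a * (Real.sqrt t * Real.sqrt t - (Real.sqrt t)⁻¹ * (Real.sqrt t)⁻¹) = 0 := by
    linear_combination Real.sqrt t * H13_5 - (Real.sqrt t)⁻¹ * H14_4
  have C : k * b * (Real.sqrt t * Real.sqrt t - (Real.sqrt t)⁻¹ * (Real.sqrt t)⁻¹) = 0 := by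
    linear_combination (Real.sqrt t)⁻¹ * H13_5 - Real.sqrt t * H14_4
  have ha0 : a = 0 := by linear_combination (-(a/2)) * A + (-(b/2)) * B
  have hk0 : k = 0 := by linear_combination (-(k/2)) * A + (-(h/2)) * C
  subst ha0 hk0
  have P : (h * b) ^ 2 = -1 := by
    linear_combination (h * b * Real.sqrt t) * H13_4 - Real.sqrt t * H14_5
      - (h ^ 2 * b ^ 2 + 1) * hSu
  nlinarith [sq_nonneg (h * b), P]
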